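/- arXiv:2105.06001 — 5 statements merged into one kernel-verified Lean document; each statement's English description precedes it below -/
import Mathlib

section
/- Let f and g be partial Boolean functions over n variables such that the union of the onset and don't-care set of f is contained in the union of the onset and don't-care set of g (i.e., for every instance x, if g x = some false then f x = some false). Let x be a positive instance of both f and g. Then every sufficient reason of f(x)=1 is subsumed by some sufficient reason of g(x)=1. -/
/-- An instance `x : Fin n → Bool` satisfies the term `t` if `x i = b` whenever `t i = some b`. -/
def Satisfies {n : ℕ} (x : Fin n → Bool) (t : Fin n → Option Bool) : Prop :=
  ∀ i b, t i = some b → x i = b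

/-- The set of instances satisfying a term. -/
def termSet {n : ℕ} (t : Fin n → Option Bool) : Set (Fin n → Bool) :=
  {x | Satisfies x t}

/-- A term is an implicant of a partial Boolean function `f` if `f` is never `some false` on it. -/
def Implicant {n : ℕ} (f : (Fin n → Bool) → Option Bool) (t : Fin n → Option Bool) : Prop :=
  ∀ x ∈ termSet t, f x ≠ some false

/-- A prime implicant: an implicant not properly subsumed by any other implicant. -/
def PrimeImplicant {n : ℕ} (f : (Fin n → Bool) → Option Bool) (t : Fin n → Option Bool) : Prop :=
  Implicant f t ∧ ∀ s, Implicant f s → termSet t ⊆ termSet s → termSet s = termSet t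

/-- A sufficient reason of `f(x)=1`: a prime implicant of `f` satisfied by `x`. -/
def SufficientReason {n : ℕ} (f : (Fin n → Bool) → Option Bool) (x : Fin n → Bool)
    (t : Fin n → Option Bool) : Prop :=
  PrimeImplicant f t ∧ Satisfies x t

open Classical in
/-- The constrained partial function `F_C`. -/
noncomputable def constrain {n : ℕ} (F : (Fin n → Bool) → Bool) (C : Set (Fin n → Bool)) :
    (Fin n → Bool) → Option Bool :=
  fun x => if x ∈ C then some (F x) else Option.none

/-- The total completion `f̄` of a partial function: true iff `f x ≠ some false`. -/
def totalCompletion {n : ℕ} (f : (Fin n → Bool) → Option Bool) : (Fin n → Bool) → Bool :=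
  fun x => decide (f x ≠ some false)

/- A sufficient reason of `f(x)=1` is an implicant of `g`, since the offset of `g` lies in that of
`f`; among the finitely many implicants of `g` subsuming it, one with maximal `termSet` is a prime
implicant of `g`, and it is still satisfied by `x`. -/

theorem Implicant.of_offset_subset {n : ℕ} {f g : (Fin n → Bool) → Option Bool}
    (h : ∀ x, g x = some false → f x = some false) {t : Fin n → Option Bool}
    (ht : Implicant f t) : Implicant g t :=
  fun y hy hgy => ht y hy (h y hgy)

theorem Implicant.exists_primeImplicant_subsumes {n : ℕ} {g : (Fin n → Bool) → Option Bool}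
    {t : Fin n → Option Bool} (ht : Implicant g t) :
    ∃ s, PrimeImplicant g s ∧ termSet t ⊆ termSet s := by
  have hfin : {s | Implicant g s ∧ termSet t ⊆ termSet s}.Finite := Set.toFinite _
  obtain ⟨s, ⟨hs, hts⟩, hmax⟩ := hfin.exists_maximalFor termSet _ ⟨t, ht, subset_rfl⟩
  refine ⟨s, ⟨hs, fun s' hs' hss' => ?_⟩, hts⟩
  exact (hmax ⟨hs', hts.trans hss'⟩ hss').antisymm hss'

theorem stmt0_general {n : ℕ} (f g : (Fin n → Bool) → Option Bool)
    (h : ∀ x, g x = some false → f x = some false)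
    (x : Fin n → Bool)
    (t : Fin n → Option Bool) (ht : SufficientReason f x t) :
    ∃ s : Fin n → Option Bool, SufficientReason g x s ∧ termSet t ⊆ termSet s := by
  obtain ⟨s, hs, hts⟩ := (ht.1.1.of_offset_subset h).exists_primeImplicant_subsumes
  exact ⟨s, ⟨hs, hts ht.2⟩, hts⟩

theorem stmt0 {n : ℕ} (f g : (Fin n → Bool) → Option Bool)
    (h : ∀ x, g x = some false → f x = some false)
    (x : Fin n → Bool) (hfx : f x = some true) (hgx : g x = some true)
    (t : Fin n → Option Bool) (ht : SufficientReason f x t) :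
    ∃ s : Fin n → Option Bool, SufficientReason g x s ∧ termSet t ⊆ termSet s :=
  stmt0_general f g h x t ht
end

section
/- Let F : (Fin n → Bool) → Bool be a total Boolean function and C : Set (Fin n → Bool) a constraint, and let x ∈ C be an instance with F x = true. Then every sufficient reason of F(x)=1 (for F viewed as the partial function some ∘ F) is subsumed by some sufficient reason of F_C(x)=1. -/
theorem stmt1 {n : ℕ} (F : (Fin n → Bool) → Bool) (C : Set (Fin n → Bool))
    (x : Fin n → Bool) (hxC : x ∈ C) (hFx : F x = true)
    (t : Fin n → Option Bool) (ht : SufficientReason (fun y => some (F y)) x t) :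
    ∃ s : Fin n → Option Bool, SufficientReason (constrain F C) x s ∧ termSet t ⊆ termSet s := by
  classical
  obtain ⟨⟨htimp, _⟩, hxt⟩ := ht
  have htc : Implicant (constrain F C) t := by
    intro y hy
    unfold constrain
    split
    · intro h
      exact htimp y hy (by simpa using h)
    · simp
  set S : Finset (Fin n → Option Bool) :=
    Finset.univ.filter (fun s => Implicant (constrain F C) s ∧ termSet t ⊆ termSet s) with hS
  have htS : t ∈ S := by simp [hS, htc]
  obtain ⟨s, hsS, hmax⟩ := Finset.exists_max_image S (fun s => (termSet s).ncard) ⟨t, htS⟩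
  simp only [hS, Finset.mem_filter, Finset.mem_univ, true_and] at hsS
  refine ⟨s, ⟨⟨hsS.1, fun s' hs' hss' => ?_⟩, hsS.2 hxt⟩, hsS.2⟩
  have hs'S : s' ∈ S := by
    simp only [hS, Finset.mem_filter, Finset.mem_univ, true_and]
    exact ⟨hs', hsS.2.trans hss'⟩
  exact (Set.eq_of_subset_of_ncard_le hss' (hmax s' hs'S)).symm
end

section
/- Let F : (Fin n → Bool) → Bool be a total Boolean function, C : Set (Fin n → Bool) a constraint, and define the total function F∧ by F∧ x = true iff x ∈ C and F x = true (the conjunction of the constraint and the decision function). Let x ∈ C with F x = true. Then for every total Boolean function G : (Fin n → Bool) → Bool agreeing with F on C (i.e., G y = F y for all y ∈ C), every sufficient reason of F∧(x)=1 is subsumed by some sufficient reason of G(x)=1 (both viewed as partial functions). -/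
theorem stmt11 {n : ℕ} (F : (Fin n → Bool) → Bool) (C : Set (Fin n → Bool))
    (Fand : (Fin n → Bool) → Bool) (hFand : ∀ y, Fand y = true ↔ y ∈ C ∧ F y = true)
    (x : Fin n → Bool) (hxC : x ∈ C) (hFx : F x = true)
    (G : (Fin n → Bool) → Bool) (hG : ∀ y ∈ C, G y = F y)
    (t : Fin n → Option Bool) (ht : SufficientReason (fun y => some (Fand y)) x t) :
    ∃ s : Fin n → Option Bool,
      SufficientReason (fun y => some (G y)) x s ∧ termSet t ⊆ termSet s := by
  classical
  -- t is an implicant of G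
  have htG : Implicant (fun y => some (G y)) t := by
    intro y hy hfalse
    have h1 : Fand y ≠ false := fun h => ht.1.1 y hy (by simp [h])
    have h2 : Fand y = true := by
      cases hFand' : Fand y with
      | false => exact absurd hFand' h1
      | true => rfl
    obtain ⟨hyC, hFy⟩ := (hFand y).1 h2
    have : G y = true := (hG y hyC).trans hFy
    simp [this] at hfalse
  -- pick an implicant s ⊇ t maximizing ncard of termSet
  set P : Set (Fin n → Option Bool) :=
    {s | Implicant (fun y => some (G y)) s ∧ termSet t ⊆ termSet s} with hP
  have htP : t ∈ P := ⟨htG, subset_rfl⟩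
  haveI : Nonempty P := ⟨⟨t, htP⟩⟩
  obtain ⟨⟨s, hsP⟩, hsmax⟩ := Finite.exists_max (fun s : P => (termSet s.1).ncard)
  refine ⟨s, ⟨⟨hsP.1, ?_⟩, ?_⟩, hsP.2⟩
  · intro s' hs' hsub
    have hs'P : s' ∈ P := ⟨hs', hsP.2.trans hsub⟩
    have hle := hsmax ⟨s', hs'P⟩
    exact (Set.eq_of_subset_of_ncard_le hsub hle (Set.toFinite _)).symm
  · have hxt : x ∈ termSet t := ht.2
    exact hsP.2 hxt
end

section
/- Let F : (Fin n → Bool) → Bool be a total Boolean function, C : Set (Fin n → Bool) a constraint, and x ∈ C with F x = true. Then for every sufficient reason t of F(x)=1 (for F viewed as the partial function some ∘ F) there exists a sufficient reason s of F_C(x)=1 whose number of literals is at most that of t, i.e., the cardinality of {i | s i ≠ none} is at most the cardinality of {i | t i ≠ none}. -/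
lemma lit_subset {n : ℕ} {s s' : Fin n → Option Bool} (y : Fin n → Bool)
    (hy : Satisfies y s) (h : termSet s ⊆ termSet s') :
    ∀ i b, s' i = some b → s i = some b := by
  intro i b hb
  by_contra hne
  have hy' : Satisfies (Function.update y i (!b)) s := by
    intro j c hc
    rcases eq_or_ne j i with rfl | hj
    · have hcb : c ≠ b := fun h' => hne (h' ▸ hc)
      simp [Function.update_self]
      cases b <;> cases c <;> simp_all
    · rw [Function.update_of_ne hj]; exact hy j c hc
  have := h hy' i b hb
  simp [Function.update_self] at this

theorem stmt14 {n : ℕ} (F : (Fin n → Bool) → Bool) (C : Set (Fin n → Bool))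
    (x : Fin n → Bool) (hxC : x ∈ C) (hFx : F x = true)
    (t : Fin n → Option Bool) (ht : SufficientReason (fun y => some (F y)) x t) :
    ∃ s : Fin n → Option Bool, SufficientReason (constrain F C) x s ∧
      Set.ncard {i : Fin n | s i ≠ none} ≤ Set.ncard {i : Fin n | t i ≠ none} := by
  classical
  set D : (Fin n → Option Bool) → ℕ := fun s => Set.ncard {i : Fin n | s i ≠ none} with hD
  set P : (Fin n → Option Bool) → Prop := fun s =>
    Implicant (constrain F C) s ∧ Satisfies x s ∧ (∀ i b, s i = some b → t i = some b) with hP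
  have hPt : P t := by
    refine ⟨?_, ht.2, fun i b h => h⟩
    intro y hy hfy
    by_cases hyC : y ∈ C
    · have : F y = false := by simpa [constrain, hyC] using hfy
      exact ht.1.1 y hy (by simp [this])
    · simp [constrain, hyC] at hfy
  have hQ : ∃ k, ∃ s, P s ∧ D s = k := ⟨D t, t, hPt, rfl⟩
  obtain ⟨s, hsP, hsD⟩ := Nat.find_spec hQ
  have hmin : ∀ s', P s' → Nat.find hQ ≤ D s' := fun s' h => Nat.find_min' hQ ⟨s', h, rfl⟩
  refine ⟨s, ⟨⟨hsP.1, ?_⟩, hsP.2.1⟩, ?_⟩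
  · intro s' hs' hsub
    have hsubset : ∀ i b, s' i = some b → s i = some b := lit_subset x hsP.2.1 hsub
    have hPs' : P s' := ⟨hs', hsub hsP.2.1, fun i b h => hsP.2.2 i b (hsubset i b h)⟩
    have h1 : Nat.find hQ ≤ D s' := hmin s' hPs'
    have hset : {i : Fin n | s' i ≠ none} ⊆ {i : Fin n | s i ≠ none} := by
      intro i hi
      simp only [Set.mem_setOf_eq] at hi ⊢
      obtain ⟨b, hb⟩ := Option.ne_none_iff_exists'.mp hi
      exact fun h => by simp [hsubset i b hb] at h
    have h2 : D s' ≤ D s := Set.ncard_le_ncard hset (Set.toFinite _)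
    have heq : {i : Fin n | s' i ≠ none} = {i : Fin n | s i ≠ none} :=
      Set.eq_of_subset_of_ncard_le hset (by simp only [hD] at h1 hsD ⊢; omega) (Set.toFinite _)
    have : s' = s := by
      funext i
      cases h : s' i with
      | some b => exact (hsubset i b h).symm
      | none =>
        by_contra hne
        have : i ∈ {i : Fin n | s' i ≠ none} := heq ▸ (fun hc => (hc ▸ hne) rfl : s i ≠ none)
        exact this h
    rw [this]
  · have h3 := hmin t hPt
    simp only [hD] at h3 hsD ⊢
    omega
end

section
/- Fix n ≥ 2. Let F : (Fin n → Bool) → Bool be the total function with F x = true iff x i = true for all i, and let C = {x | x 0 = true → ∀ i, x i = true}. Let x₁ be the all-true instance. Then: (i) the term t_full with t_full i = some true for all i is the unique sufficient reason of F(x₁)=1 (for F viewed as the partial function some ∘ F); (ii) the term t₁ with t₁ 0 = some true and t₁ i = none for i ≠ 0 is a sufficient reason of F_C(x₁)=1; and (iii) t₁ properly subsumes t_full, i.e., [t_full] is a proper subset of [t₁]. -/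
/-!
A term `t` is a prime implicant of `f` as soon as `[t]` is exactly the set of instances on which
`f` is not `false`: every implicant lives inside that set. For the conjunction this set is the
single all-true instance, i.e. `[t_full]`; under the constraint `C` the only instances on which
`F_C` is not `false` are those with `x 0 = true`, i.e. `[t₁]`. Uniqueness of `t_full` holds because
flipping any single coordinate of the all-true instance falsifies the conjunction, so no sufficient
reason can leave a coordinate free.
-/

variable {n : ℕ}

lemma termSet_of_forall_eq_some {t : Fin n → Option Bool} {b : Bool} (ht : ∀ i, t i = some b) :
    termSet t = {x | ∀ i, x i = b} := by
  ext x
  refine ⟨fun hx i => hx i b (ht i), fun hx i c hc => ?_⟩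
  rw [ht i, Option.some_inj] at hc
  exact hc ▸ hx i

lemma termSet_of_eq_some_of_eq_none {t : Fin n → Option Bool} {i₀ : Fin n} {b : Bool}
    (h₀ : t i₀ = some b) (ht : ∀ i, i ≠ i₀ → t i = none) :
    termSet t = {x | x i₀ = b} := by
  ext x
  refine ⟨fun hx => hx i₀ b h₀, fun hx i c hc => ?_⟩
  by_cases hi : i = i₀
  · subst hi
    rw [h₀, Option.some_inj] at hc
    exact hc ▸ hx
  · simp [ht i hi] at hc

lemma Satisfies.update_of_eq_none {x : Fin n → Bool} {t : Fin n → Option Bool} {i : Fin n}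
    (hx : Satisfies x t) (hi : t i = none) (b : Bool) : Satisfies (Function.update x i b) t := by
  intro j c hc
  have hj : j ≠ i := by rintro rfl; simp [hi] at hc
  rw [Function.update_of_ne hj]
  exact hx j c hc

lemma Implicant.eq_some_of_forall_update {f : (Fin n → Bool) → Option Bool}
    {t : Fin n → Option Bool} {x : Fin n → Bool} (ht : Implicant f t) (hx : Satisfies x t)
    (hflip : ∀ i, f (Function.update x i (!x i)) = some false) :
    t = fun i => some (x i) := by
  funext i
  cases hti : t i with
  | none => exact absurd (hflip i) (ht _ (hx.update_of_eq_none hti _))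
  | some b => rw [hx i b hti]

lemma primeImplicant_of_termSet_eq {f : (Fin n → Bool) → Option Bool} {t : Fin n → Option Bool}
    (h : termSet t = {x | f x ≠ some false}) : PrimeImplicant f t :=
  ⟨fun x hx => by rw [h] at hx; exact hx,
    fun _ hs hts => hts.antisymm' fun x hx => h ▸ hs x hx⟩

lemma setOf_some_ne_some_false (F : (Fin n → Bool) → Bool) :
    {x | some (F x) ≠ some false} = {x | F x = true} := by
  ext x
  simp

lemma setOf_constrain_ne_some_false (F : (Fin n → Bool) → Bool) (C : Set (Fin n → Bool)) :
    {x | constrain F C x ≠ some false} = Cᶜ ∪ {x | F x = true} := by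
  ext x
  by_cases hx : x ∈ C <;> simp [constrain, hx]

lemma setOf_forall_eq_ne_setOf_eq {i₀ i₁ : Fin n} (h : i₁ ≠ i₀) (b : Bool) :
    {x : Fin n → Bool | ∀ i, x i = b} ≠ {x | x i₀ = b} := by
  have hy : Function.update (fun _ => b) i₁ (!b) ∈ {x : Fin n → Bool | x i₀ = b} := by
    simp [Function.update_of_ne h.symm]
  intro heq
  rw [← heq] at hy
  simpa using hy i₁

lemma eq_some_true_of_sufficientReason_and {F : (Fin n → Bool) → Bool}
    (hF : ∀ x, F x = true ↔ ∀ i, x i = true) {x : Fin n → Bool} (hx : ∀ i, x i = true)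
    {t : Fin n → Option Bool} (ht : SufficientReason (fun y => some (F y)) x t) :
    t = fun _ => some true := by
  have hflip (i : Fin n) : F (Function.update x i (!x i)) = false := by
    rw [Bool.eq_false_iff]
    intro h
    simpa [hx] using (hF _).1 h i
  rw [ht.1.1.eq_some_of_forall_update ht.2 fun i => by rw [hflip]]
  simp only [hx]

theorem stmt15 (n : ℕ) (hn : 2 ≤ n)
    (F : (Fin n → Bool) → Bool) (hF : ∀ x, F x = true ↔ ∀ i, x i = true)
    (C : Set (Fin n → Bool))
    (hC : C = {x : Fin n → Bool | x ⟨0, by omega⟩ = true → ∀ i, x i = true})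
    (x₁ : Fin n → Bool) (hx₁ : ∀ i, x₁ i = true)
    (tfull : Fin n → Option Bool) (htfull : ∀ i, tfull i = some true)
    (t₁ : Fin n → Option Bool) (ht₁0 : t₁ ⟨0, by omega⟩ = some true)
    (ht₁ : ∀ i : Fin n, i ≠ ⟨0, by omega⟩ → t₁ i = none) :
    (SufficientReason (fun y => some (F y)) x₁ tfull ∧
        ∀ t : Fin n → Option Bool, SufficientReason (fun y => some (F y)) x₁ t → t = tfull) ∧
      SufficientReason (constrain F C) x₁ t₁ ∧
      (termSet tfull ⊆ termSet t₁ ∧ termSet tfull ≠ termSet t₁) := by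
  set i₀ : Fin n := ⟨0, by omega⟩
  have hAnd : {x | F x = true} = {x : Fin n → Bool | ∀ i, x i = true} := Set.ext hF
  have hfull : termSet tfull = {x | ∀ i, x i = true} := termSet_of_forall_eq_some htfull
  have h₁ : termSet t₁ = {x | x i₀ = true} := termSet_of_eq_some_of_eq_none ht₁0 ht₁
  have hsr_full : SufficientReason (fun y => some (F y)) x₁ tfull :=
    ⟨primeImplicant_of_termSet_eq (by rw [setOf_some_ne_some_false, hAnd, hfull]),
      show x₁ ∈ termSet tfull from hfull ▸ hx₁⟩
  have hsr₁ : SufficientReason (constrain F C) x₁ t₁ := by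
    refine ⟨primeImplicant_of_termSet_eq ?_, show x₁ ∈ termSet t₁ from h₁ ▸ hx₁ i₀⟩
    rw [setOf_constrain_ne_some_false, hAnd, h₁, hC]
    ext x
    by_cases hall : ∀ i, x i = true <;> simp [hall]
  refine ⟨⟨hsr_full, fun t ht => ?_⟩, hsr₁, ?_, ?_⟩
  · rw [eq_some_true_of_sufficientReason_and hF hx₁ ht]
    exact (funext htfull).symm
  · rw [hfull, h₁]
    exact fun x hx => hx i₀
  · rw [hfull, h₁]
    exact setOf_forall_eq_ne_setOf_eq (i₁ := ⟨1, by omega⟩) (by simp [i₀]) true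
end
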